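/- arXiv:1305.5376 — 5 statements merged into one kernel-verified Lean document; each statement's English description precedes it below -/
import Mathlib

section
/- Define C(x) = (1/2)·log₂(1+x). Let h₁, h₂, h₃, P ≥ 0 with h₁² ≥ h₂² ≥ h₃² and h₂²P > 1/2. Then the non-restricted upper bound C̄_N = C((h₂²+h₃²)P) + C(min{h₁²+h₃², (|h₂|+|h₃|)²}·P) satisfies C̄_N - 2·C(h₂²P - 1/2) ≤ 2. -/
/-!
Put `x = h₂²P - 1/2`, so that `1 + x = h₂²P + 1/2`. Both effective gains of `C̄_N` are at most
`4h₂²`, hence each argument `1 + yP` of `C̄_N` is at most `4(1 + x)`, and each of its two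
halves exceeds `C(x)` by at most `(1/2)·log₂ 4 = 1` bit.
-/

open Real

lemma Real.logb_two_le_two_add_of_le_four_mul {a b : ℝ} (ha : 0 < a) (hab : a ≤ 4 * b) :
    logb 2 a ≤ 2 + logb 2 b := by
  have hb : 0 < b := by linarith
  calc logb 2 a ≤ logb 2 (4 * b) := logb_le_logb_of_le (by norm_num) ha hab
    _ = 2 + logb 2 b := by
      rw [logb_mul (by norm_num) hb.ne', show (4 : ℝ) = 2 ^ (2 : ℕ) by norm_num, logb_pow,
        logb_self_eq_one (by norm_num)]
      norm_num

lemma logb_one_add_mul_le_two_add {y g P : ℝ} (hy : 0 ≤ y) (hyg : y ≤ 4 * g)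
    (hgP : 1 / 2 < g * P) :
    logb 2 (1 + y * P) ≤ 2 + logb 2 (1 + (g * P - 1 / 2)) := by
  have hP : 0 < P := pos_of_mul_pos_right (a := g) (by linarith) (by linarith)
  have hyP : y * P ≤ 4 * (g * P) := by nlinarith
  exact logb_two_le_two_add_of_le_four_mul (by positivity) (by linarith)

lemma abs_add_abs_sq_le_four_mul_sq {a b : ℝ} (h : b ^ 2 ≤ a ^ 2) :
    (|a| + |b|) ^ 2 ≤ 4 * a ^ 2 := by
  have hba : |b| ≤ |a| := sq_le_sq.mp h
  nlinarith [abs_nonneg b, sq_abs a]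

theorem nonrestricted_additive_gap_general (h₁ h₂ h₃ P : ℝ)
    (h23 : h₃ ^ 2 ≤ h₂ ^ 2) (hpow : 1 / 2 < h₂ ^ 2 * P) :
    ((1 / 2) * Real.logb 2 (1 + (h₂ ^ 2 + h₃ ^ 2) * P) +
      (1 / 2) * Real.logb 2 (1 + min (h₁ ^ 2 + h₃ ^ 2) ((|h₂| + |h₃|) ^ 2) * P)) -
      2 * ((1 / 2) * Real.logb 2 (1 + (h₂ ^ 2 * P - 1 / 2))) ≤ 2 := by
  have hsum := logb_one_add_mul_le_two_add (y := h₂ ^ 2 + h₃ ^ 2) (by positivity)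
    (by nlinarith [sq_nonneg h₂]) hpow
  have hmin := logb_one_add_mul_le_two_add (y := min (h₁ ^ 2 + h₃ ^ 2) ((|h₂| + |h₃|) ^ 2))
    (by positivity) ((min_le_right _ _).trans (abs_add_abs_sq_le_four_mul_sq h23)) hpow
  linarith

theorem nonrestricted_additive_gap (h₁ h₂ h₃ P : ℝ)
    (hh₁ : 0 ≤ h₁) (hh₂ : 0 ≤ h₂) (hh₃ : 0 ≤ h₃) (hP : 0 ≤ P)
    (h12 : h₂ ^ 2 ≤ h₁ ^ 2) (h23 : h₃ ^ 2 ≤ h₂ ^ 2) (hpow : 1 / 2 < h₂ ^ 2 * P) :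
    ((1 / 2) * Real.logb 2 (1 + (h₂ ^ 2 + h₃ ^ 2) * P) +
      (1 / 2) * Real.logb 2 (1 + min (h₁ ^ 2 + h₃ ^ 2) ((|h₂| + |h₃|) ^ 2) * P)) -
      2 * ((1 / 2) * Real.logb 2 (1 + (h₂ ^ 2 * P - 1 / 2))) ≤ 2 :=
  nonrestricted_additive_gap_general h₁ h₂ h₃ P h23 hpow
end

section
/- Define C(x) = (1/2)·log₂(1+x). Let h₂, h₃, P ≥ 0 with h₃² ≤ h₂² and h₂²P > 1/2. Then the restricted upper bound C̄_R = 2·C((h₂²+h₃²)P) satisfies C̄_R - 2·C(h₂²P - 1/2) ≤ 1. -/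
noncomputable def awgnCapacity (x : ℝ) : ℝ := 1 / 2 * Real.logb 2 (1 + x)

lemma awgnCapacity_le_awgnCapacity {x y : ℝ} (hx : -1 < x) (hxy : x ≤ y) :
    awgnCapacity x ≤ awgnCapacity y := by
  unfold awgnCapacity
  gcongr
  · norm_num
  · linarith

lemma two_mul_awgnCapacity_two_mul {x : ℝ} (hx : x ≠ -1 / 2) :
    2 * awgnCapacity (2 * x) = 2 * awgnCapacity (x - 1 / 2) + 1 := by
  have hne : 1 + (x - 1 / 2) ≠ 0 := fun h => hx (by linarith)
  have hsplit : 1 + 2 * x = 2 * (1 + (x - 1 / 2)) := by ring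
  unfold awgnCapacity
  rw [hsplit, Real.logb_mul two_ne_zero hne, Real.logb_self_eq_one one_lt_two]
  ring

theorem restricted_additive_gap_general (h₂ h₃ P : ℝ)
    (hP : 0 ≤ P)
    (h23 : h₃ ^ 2 ≤ h₂ ^ 2) (hpow : 1 / 2 < h₂ ^ 2 * P) :
    2 * ((1 / 2) * Real.logb 2 (1 + (h₂ ^ 2 + h₃ ^ 2) * P)) -
      2 * ((1 / 2) * Real.logb 2 (1 + (h₂ ^ 2 * P - 1 / 2))) ≤ 1 := by
  have hsnr : (h₂ ^ 2 + h₃ ^ 2) * P ≤ 2 * (h₂ ^ 2 * P) := by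
    nlinarith [mul_le_mul_of_nonneg_right h23 hP]
  have hnonneg : 0 ≤ (h₂ ^ 2 + h₃ ^ 2) * P := by positivity
  have hbound : 2 * awgnCapacity ((h₂ ^ 2 + h₃ ^ 2) * P) ≤
      2 * awgnCapacity (h₂ ^ 2 * P - 1 / 2) + 1 :=
    calc 2 * awgnCapacity ((h₂ ^ 2 + h₃ ^ 2) * P)
        ≤ 2 * awgnCapacity (2 * (h₂ ^ 2 * P)) := by
          gcongr
          exact awgnCapacity_le_awgnCapacity (by linarith) hsnr
      _ = 2 * awgnCapacity (h₂ ^ 2 * P - 1 / 2) + 1 :=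
          two_mul_awgnCapacity_two_mul (by linarith)
  unfold awgnCapacity at hbound
  linarith

theorem restricted_additive_gap (h₂ h₃ P : ℝ)
    (hh₂ : 0 ≤ h₂) (hh₃ : 0 ≤ h₃) (hP : 0 ≤ P)
    (h23 : h₃ ^ 2 ≤ h₂ ^ 2) (hpow : 1 / 2 < h₂ ^ 2 * P) :
    2 * ((1 / 2) * Real.logb 2 (1 + (h₂ ^ 2 + h₃ ^ 2) * P)) -
      2 * ((1 / 2) * Real.logb 2 (1 + (h₂ ^ 2 * P - 1 / 2))) ≤ 1 :=
  restricted_additive_gap_general h₂ h₃ P hP h23 hpow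
end

section
/- Define C(x) = (1/2)·log₂(1+x). For the symmetric case (all channel gains equal 1), for every P > 1/2: min{3·C(P), 2·C(2P)} - 2·C(P - 1/2) ≤ 1. -/
/-! Doubling the power costs one bit: `1 + 2P = 2 (1 + (P - 1/2))`, so `2 C(2P)` exceeds the
lower bound `2 C(P - 1/2)` by exactly one, and the minimum is at most `2 C(2P)`. -/

open Real

theorem logb_two_one_add_two_mul {P : ℝ} (hP : 1 + 2 * P ≠ 0) :
    logb 2 (1 + 2 * P) = 1 + logb 2 (1 + (P - 1 / 2)) := by
  have hsplit : 1 + 2 * P = 2 * (1 + (P - 1 / 2)) := by ring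
  rw [hsplit, logb_mul two_ne_zero (by rw [hsplit] at hP; exact right_ne_zero_of_mul hP),
    logb_self_eq_one one_lt_two]

theorem symmetric_gap_high_power (P : ℝ) (hP : 1 / 2 < P) :
    min (3 * ((1 / 2) * Real.logb 2 (1 + P))) (2 * ((1 / 2) * Real.logb 2 (1 + 2 * P))) -
      2 * ((1 / 2) * Real.logb 2 (1 + (P - 1 / 2))) ≤ 1 := by
  have hdouble := logb_two_one_add_two_mul (P := P) (by linarith)
  have hmin := min_le_right (3 * ((1 / 2) * logb 2 (1 + P))) (2 * ((1 / 2) * logb 2 (1 + 2 * P)))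
  linarith
end

section
/- Define C(x) = (1/2)·log₂(1+x) and C⁺(x) = max{0, C(x)}. For the symmetric case with all gains 1 and any P with 0 ≤ P ≤ 1/2: min{3·C(P), 2·C(2P)} - min{C(2P), 2·C(P)} ≤ 1. -/
/-! The gap is at most `C(2P) ≤ 1/2`: since `1 + 2P ≤ (1 + P)²` we have `C(2P) ≤ 2 C(P)`, so the
lower bound equals `C(2P)` while the upper bound is at most `2 C(2P)`; and `1 + 2P ≤ 2` gives
`C(2P) ≤ C(1) = 1/2`. -/

open Real

noncomputable def gaussianCapacity (x : ℝ) : ℝ := 1 / 2 * logb 2 (1 + x)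

lemma gaussianCapacity_two_mul_le {P : ℝ} (hP : 0 < 1 + 2 * P) :
    gaussianCapacity (2 * P) ≤ 2 * gaussianCapacity P := by
  have hsq : 1 + 2 * P ≤ (1 + P) ^ 2 := by nlinarith [sq_nonneg P]
  have hlog : logb 2 (1 + 2 * P) ≤ 2 * logb 2 (1 + P) := by
    calc logb 2 (1 + 2 * P) ≤ logb 2 ((1 + P) ^ 2) := logb_le_logb_of_le one_lt_two hP hsq
      _ = 2 * logb 2 (1 + P) := by rw [logb_pow]; push_cast; ring
  unfold gaussianCapacity
  linarith

lemma gaussianCapacity_le_half {x : ℝ} (hx0 : -1 < x) (hx : x ≤ 1) :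
    gaussianCapacity x ≤ 1 / 2 := by
  have hlog : logb 2 (1 + x) ≤ 1 :=
    calc logb 2 (1 + x) ≤ logb 2 2 := logb_le_logb_of_le one_lt_two (by linarith) (by linarith)
      _ = 1 := logb_self_eq_one one_lt_two
  unfold gaussianCapacity
  linarith

lemma min_sub_min_le_of_le_two_mul {x y : ℝ} (h : y ≤ 2 * x) :
    min (3 * x) (2 * y) - min y (2 * x) ≤ y := by
  rw [min_eq_left h]
  linarith [min_le_right (3 * x) (2 * y)]

theorem symmetric_gap_low_power (P : ℝ) (hP0 : 0 ≤ P) (hP : P ≤ 1 / 2) :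
    min (3 * ((1 / 2) * Real.logb 2 (1 + P))) (2 * ((1 / 2) * Real.logb 2 (1 + 2 * P))) -
      min ((1 / 2) * Real.logb 2 (1 + 2 * P)) (2 * ((1 / 2) * Real.logb 2 (1 + P))) ≤ 1 := by
  change min (3 * gaussianCapacity P) (2 * gaussianCapacity (2 * P)) -
    min (gaussianCapacity (2 * P)) (2 * gaussianCapacity P) ≤ 1
  calc _ ≤ gaussianCapacity (2 * P) :=
        min_sub_min_le_of_le_two_mul (gaussianCapacity_two_mul_le (by linarith))
    _ ≤ 1 / 2 := gaussianCapacity_le_half (by linarith) (by linarith)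
    _ ≤ 1 := by norm_num
end

section
/- Consider the linear program: maximize R₁₂+R₁₃+R₂₁+R₂₃+R₃₁+R₃₂ over nonnegative reals subject to R₃₁+R₃₂ ≤ c₃, R₁₂+R₁₃+R₂₁+R₂₃ ≤ c₃, R₁₂+R₁₃+R₃₁+R₃₂ ≤ c₂, R₂₁+R₂₃+R₃₁+R₃₂ ≤ c₁', and the total sum ≤ c_tot, where c₃ ≤ c₂ ≤ c₁' and c₃ ≤ c_tot. The optimal value equals min{ (c₁'+c₂+c₃)/2, c_tot, 2c₃ }. -/
/-!
The three upper bounds are linear consequences of the constraints: the total-rate constraint,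
the sum of the first two constraints, and half the sum of the last three link constraints
(which counts every rate exactly twice). Conversely, only the grouped rates
`R₁₂ + R₁₃`, `R₂₁ + R₂₃`, `R₃₁ + R₃₂` matter, and every value between `0` and the claimed
optimum is attained by an explicit grouped rate vector.
-/

theorem exists_grouped_rates_of_le {c₁' c₂ c₃ s : ℝ} (h32 : c₃ ≤ c₂) (h21 : c₂ ≤ c₁')
    (hs0 : 0 ≤ s) (hs3 : s ≤ 2 * c₃) (hs : 2 * s ≤ c₁' + c₂ + c₃) :
    ∃ a b c : ℝ, 0 ≤ a ∧ 0 ≤ b ∧ 0 ≤ c ∧ c ≤ c₃ ∧ a + b ≤ c₃ ∧ a + c ≤ c₂ ∧ b + c ≤ c₁' ∧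
      a + b + c = s := by
  rcases le_total s c₃ with hsc₃ | hc₃s
  · refine ⟨s, 0, 0, ?_, ?_, ?_, ?_, ?_, ?_, ?_, ?_⟩ <;> linarith
  rcases le_total s c₂ with hsc₂ | hc₂s
  · refine ⟨c₃, 0, s - c₃, ?_, ?_, ?_, ?_, ?_, ?_, ?_, ?_⟩ <;> linarith
  · refine ⟨c₂ + c₃ - s, s - c₂, s - c₃, ?_, ?_, ?_, ?_, ?_, ?_, ?_, ?_⟩ <;> linarith

theorem cdf_linear_program (c₁' c₂ c₃ ctot : ℝ)
    (hc₃ : 0 ≤ c₃) (h32 : c₃ ≤ c₂) (h21 : c₂ ≤ c₁') (h3t : c₃ ≤ ctot) :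
    IsGreatest
      {s : ℝ | ∃ R₁₂ R₁₃ R₂₁ R₂₃ R₃₁ R₃₂ : ℝ,
        0 ≤ R₁₂ ∧ 0 ≤ R₁₃ ∧ 0 ≤ R₂₁ ∧ 0 ≤ R₂₃ ∧ 0 ≤ R₃₁ ∧ 0 ≤ R₃₂ ∧
        R₃₁ + R₃₂ ≤ c₃ ∧
        R₁₂ + R₁₃ + R₂₁ + R₂₃ ≤ c₃ ∧
        R₁₂ + R₁₃ + R₃₁ + R₃₂ ≤ c₂ ∧
        R₂₁ + R₂₃ + R₃₁ + R₃₂ ≤ c₁' ∧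
        R₁₂ + R₁₃ + R₂₁ + R₂₃ + R₃₁ + R₃₂ ≤ ctot ∧
        s = R₁₂ + R₁₃ + R₂₁ + R₂₃ + R₃₁ + R₃₂}
      (min (min ((c₁' + c₂ + c₃) / 2) ctot) (2 * c₃)) := by
  set m := min (min ((c₁' + c₂ + c₃) / 2) ctot) (2 * c₃)
  refine ⟨?_, ?_⟩
  · have hm_half : m ≤ (c₁' + c₂ + c₃) / 2 := (min_le_left _ _).trans (min_le_left _ _)
    have hm_tot : m ≤ ctot := (min_le_left _ _).trans (min_le_right _ _)
    have hm0 : 0 ≤ m := le_min (le_min (by linarith) (by linarith)) (by linarith)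
    obtain ⟨a, b, c, ha, hb, hc, hc₃', hab, hac, hbc, habc⟩ :=
      exists_grouped_rates_of_le h32 h21 hm0 (min_le_right _ _) (by linarith)
    refine ⟨a, 0, b, 0, c, 0, ha, le_rfl, hb, le_rfl, hc, le_rfl, ?_, ?_, ?_, ?_, ?_, ?_⟩ <;>
      linarith
  · rintro s ⟨R₁₂, R₁₃, R₂₁, R₂₃, R₃₁, R₃₂, -, -, -, -, -, -, h₃, h₁₂, h₂, h₁, htot, rfl⟩
    exact le_min (le_min (by linarith) htot) (by linarith)
end
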